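/- The decoherence-free algebra N of a unital completely positive map Φ on B(H) is invariant under Φ: Φ(N) ⊆ N. -/

import Mathlib

/-!
Fix `X ∈ N` and `m`. Kadison–Schwarz for the unital CP maps `Φ` and `Φ ^ m`, together with the
positivity of `Φ ^ m`, gives
`(Φ^(m+1) X)ᴴ Φ^(m+1) X ≤ Φ^m ((Φ X)ᴴ Φ X) ≤ Φ^(m+1) (Xᴴ X)`,
and the two ends agree because `X ∈ N`. Equality in the Schwarz inequality of `Φ ^ m` at `Φ X`
puts `(Φ X)ᴴ` in the multiplicative domain of `Φ ^ m` (Choi), which is the first half of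
`Φ X ∈ N`; since `N` is closed under `ᴴ`, the same argument for `Xᴴ` gives the second half.
-/

open Matrix
open scoped ComplexOrder

abbrev MatC (n : ℕ) := Matrix (Fin n) (Fin n) ℂ

/-- Complete positivity of a linear map on matrices: every matrix amplification
preserves positive semidefiniteness. -/
def IsCompletelyPositive {n : ℕ} (Φ : Module.End ℂ (MatC n)) : Prop :=
  ∀ (k : ℕ) (M : Matrix (Fin n × Fin k) (Fin n × Fin k) ℂ), M.PosSemidef →
    (Matrix.of fun p q : Fin n × Fin k =>
      Φ (Matrix.of fun i j => M (i, p.2) (j, q.2)) p.1 q.1).PosSemidef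

/-- The decoherence-free algebra of Φ. -/
def decFree {n : ℕ} (Φ : Module.End ℂ (MatC n)) : Set (MatC n) :=
  {X | ∀ (m : ℕ) (Y : MatC n), (Φ ^ m) (Y * X) = (Φ ^ m) Y * (Φ ^ m) X ∧
        (Φ ^ m) (X * Y) = (Φ ^ m) X * (Φ ^ m) Y}

open scoped MatrixOrder

theorem Matrix.eq_zero_of_forall_dotProduct_mulVec_self_eq_zero {ι : Type*} [Fintype ι]
    [DecidableEq ι] {D : Matrix ι ι ℂ} (h : ∀ x : ι → ℂ, star x ⬝ᵥ D *ᵥ x = 0) : D = 0 := by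
  have : D.toEuclideanLin = 0 := (inner_map_self_eq_zero _).mp fun x => by
    rw [EuclideanSpace.inner_eq_star_dotProduct, dotProduct_star, dotProduct_comm]
    simpa using h x
  simpa using this

theorem Complex.eq_zero_of_forall_quadratic_nonneg {q : ℂ} {e : ℝ}
    (h : ∀ t : ℂ, 0 ≤ 2 * (t * q).re + normSq t * e) : q = 0 := by
  have hdisc : discrim (normSq q * e) (2 * normSq q) 0 ≤ 0 := discrim_le_zero fun ε => by
    have := h (ε * (starRingEnd ℂ) q)
    rw [mul_assoc, ← normSq_eq_conj_mul_self, normSq_mul, normSq_conj, normSq_ofReal] at this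
    simp only [re_ofReal_mul, ofReal_re] at this
    linarith
  rw [discrim] at hdisc
  exact normSq_eq_zero.mp (by nlinarith [normSq_nonneg q])

namespace IsCompletelyPositive

variable {n : ℕ} {Φ Ψ : Module.End ℂ (MatC n)}

theorem one : IsCompletelyPositive (1 : Module.End ℂ (MatC n)) := fun _ _ hM => hM

theorem mul (hΦ : IsCompletelyPositive Φ) (hΨ : IsCompletelyPositive Ψ) :
    IsCompletelyPositive (Φ * Ψ) := fun k M hM => hΦ k _ (hΨ k M hM)

theorem pow (hΦ : IsCompletelyPositive Φ) (m : ℕ) : IsCompletelyPositive (Φ ^ m) := by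
  induction m with
  | zero => exact one
  | succ m ih => exact pow_succ Φ m ▸ ih.mul hΦ

theorem monotone (hΦ : IsCompletelyPositive Φ) : Monotone Φ := by
  intro A B hAB
  let e : Fin n × Fin 1 ≃ Fin n := Equiv.prodUnique (Fin n) (Fin 1)
  have h := hΦ 1 ((B - A).submatrix e e) ((posSemidef_submatrix_equiv e).mpr hAB)
  rw [Matrix.le_iff, ← map_sub, ← posSemidef_submatrix_equiv e]
  exact h

theorem posSemidef_gram (hΦ : IsCompletelyPositive Φ) {k : ℕ} (c : Fin k → MatC n) :
    (of fun p q : Fin n × Fin k => Φ ((c p.2)ᴴ * c q.2) p.1 q.1).PosSemidef := by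
  let B : Matrix (Fin n) (Fin n × Fin k) ℂ := of fun r p => c p.2 r p.1
  have hB (u v : Fin k) : (of fun i j => (Bᴴ * B) (i, u) (j, v)) = (c u)ᴴ * c v := by
    ext i j
    simp [B, Matrix.mul_apply]
  simpa only [hB] using hΦ k (Bᴴ * B) (posSemidef_conjTranspose_mul_self B)

theorem map_conjTranspose (hΦ : IsCompletelyPositive Φ) (A : MatC n) : Φ Aᴴ = (Φ A)ᴴ := by
  ext i j
  simpa using (congrFun₂ (hΦ.posSemidef_gram ![A, 1]).isHermitian (i, 0) (j, 1)).symm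

theorem kadison_schwarz (hΦ : IsCompletelyPositive Φ) (hu : Φ 1 = 1) (A : MatC n) :
    (Φ A)ᴴ * Φ A ≤ Φ (Aᴴ * A) := by
  let e : Fin n ⊕ Fin n ≃ Fin n × Fin 2 := (Equiv.boolProdEquivSum _).symm.trans <|
    (Equiv.prodComm _ _).trans (Equiv.prodCongr (Equiv.refl _) finTwoEquiv.symm)
  have hblocks :
      (of fun p q : Fin n × Fin 2 => Φ ((![A, 1] p.2)ᴴ * ![A, 1] q.2) p.1 q.1).submatrix e e =
        fromBlocks (Φ (Aᴴ * A)) (Φ A)ᴴ (Φ A)ᴴᴴ 1 := by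
    ext (i | i) (j | j) <;> simp [e, finTwoEquiv, hu, hΦ.map_conjTranspose]
  have h := (posSemidef_submatrix_equiv e).mpr (hΦ.posSemidef_gram ![A, 1])
  have : Invertible (1 : MatC n) := invertibleOne
  rw [hblocks, PosDef.fromBlocks₂₂ _ _ PosDef.one] at h
  simpa [Matrix.le_iff] using h

theorem map_conjTranspose_mul_of_schwarz_eq (hΦ : IsCompletelyPositive Φ) (hu : Φ 1 = 1)
    {a : MatC n} (ha : Φ (aᴴ * a) = (Φ a)ᴴ * Φ a) (b : MatC n) :
    Φ (aᴴ * b) = (Φ a)ᴴ * Φ b := by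
  set D := Φ (aᴴ * b) - (Φ a)ᴴ * Φ b
  set E := Φ (bᴴ * b) - (Φ b)ᴴ * Φ b
  -- the Schwarz defect at `a + t • b`, whose `a`-part vanishes by `ha`
  have hDE (t : ℂ) : 0 ≤ t • D + star t • Dᴴ + (star t * t) • E := by
    have h := sub_nonneg.mpr (hΦ.kadison_schwarz hu (a + t • b))
    convert h using 1
    simp only [D, E, conjTranspose_add, conjTranspose_sub, conjTranspose_mul, conjTranspose_smul,
      conjTranspose_conjTranspose, ← hΦ.map_conjTranspose, add_mul, mul_add, smul_mul_assoc,
      mul_smul_comm, map_add, map_smul, ha]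
    module
  have hq (x : Fin n → ℂ) : star x ⬝ᵥ D *ᵥ x = 0 := by
    refine Complex.eq_zero_of_forall_quadratic_nonneg (e := (star x ⬝ᵥ E *ᵥ x).re) fun t => ?_
    have hDstar : star x ⬝ᵥ Dᴴ *ᵥ x = star (star x ⬝ᵥ D *ᵥ x) := by
      rw [mulVec_conjTranspose, star_dotProduct_star, dotProduct_mulVec]
    have h := (nonneg_iff_posSemidef.mp (hDE t)).dotProduct_mulVec_nonneg x
    simp only [add_mulVec, smul_mulVec, dotProduct_add, dotProduct_smul, smul_eq_mul,
      hDstar, Complex.star_def, ← Complex.normSq_eq_conj_mul_self, ← map_mul] at h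
    have hre := (Complex.le_def.mp h).1
    simp only [Complex.add_re, Complex.re_ofReal_mul, Complex.zero_re, Complex.conj_re] at hre
    linarith
  exact sub_eq_zero.mp (eq_zero_of_forall_dotProduct_mulVec_self_eq_zero hq)

theorem schwarz_eq_of_schwarz_eq_mul (hΨ : IsCompletelyPositive Ψ) (hΨu : Ψ 1 = 1)
    (hΦ : IsCompletelyPositive Φ) (hΦu : Φ 1 = 1) {X : MatC n}
    (h : (Ψ * Φ) (Xᴴ * X) = ((Ψ * Φ) X)ᴴ * (Ψ * Φ) X) :
    Ψ ((Φ X)ᴴ * Φ X) = (Ψ (Φ X))ᴴ * Ψ (Φ X) :=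
  le_antisymm (hΨ.monotone (hΦ.kadison_schwarz hΦu X) |>.trans_eq h) (hΨ.kadison_schwarz hΨu _)

end IsCompletelyPositive

section decFree

variable {n : ℕ} {Φ : Module.End ℂ (MatC n)}

theorem conjTranspose_mem_decFree (hΦ : IsCompletelyPositive Φ) {X : MatC n}
    (hX : X ∈ decFree Φ) : Xᴴ ∈ decFree Φ := by
  intro m Y
  have hΦm := (hΦ.pow m).map_conjTranspose
  obtain ⟨hleft, hright⟩ := hX m Yᴴ
  constructor
  · simpa [← hΦm] using congrArg conjTranspose hright
  · simpa [← hΦm] using congrArg conjTranspose hleft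

theorem map_conjTranspose_mul_of_mem_decFree (hΦ : IsCompletelyPositive Φ) (hu : Φ 1 = 1)
    {X : MatC n} (hX : X ∈ decFree Φ) (m : ℕ) (Y : MatC n) :
    (Φ ^ m) ((Φ X)ᴴ * Y) = ((Φ ^ m) (Φ X))ᴴ * (Φ ^ m) Y := by
  have hum : (Φ ^ m) 1 = 1 := by
    rw [Module.End.coe_pow]
    exact Function.IsFixedPt.iterate hu m
  refine (hΦ.pow m).map_conjTranspose_mul_of_schwarz_eq hum ?_ Y
  refine (hΦ.pow m).schwarz_eq_of_schwarz_eq_mul hum hΦ hu ?_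
  rw [← pow_succ, (hX (m + 1) Xᴴ).1, (hΦ.pow (m + 1)).map_conjTranspose]

end decFree

/-- The decoherence-free algebra is invariant under Φ. -/
theorem decFree_invariant {n : ℕ} (Φ : Module.End ℂ (MatC n))
    (hCP : IsCompletelyPositive Φ) (hunit : Φ 1 = 1)
    (X : MatC n) (hX : X ∈ decFree Φ) : Φ X ∈ decFree Φ := by
  intro m Y
  have hΦm := (hCP.pow m).map_conjTranspose
  constructor
  · simpa [← hΦm] using
      congrArg conjTranspose (map_conjTranspose_mul_of_mem_decFree hCP hunit hX m Yᴴ)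
  · simpa [hCP.map_conjTranspose, hΦm] using
      map_conjTranspose_mul_of_mem_decFree hCP hunit (conjTranspose_mem_decFree hCP hX) m Y
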